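/- Let G be a broken wheel with principal path P = p₀ q p₁ and let L be a list-assignment for G with |L(v)| ≥ 3 for every v ∈ V(G) \ {p₀, q, p₁} and with L(p₀), L(p₁) nonempty. Let φ be an L-coloring of {p₀, p₁} and let S ⊆ L(q) \ {φ(p₀), φ(p₁)} with |S| ≥ 2 such that for every s ∈ S there is no L-coloring of G assigning φ(p₀), s, φ(p₁) to p₀, q, p₁ respectively. Then: (i) |S| = 2 and the path G − q has an odd number of edges; and (ii) every L-coloring ψ of V(P) which does not extend to an L-coloring of G satisfies either ψ(p₀) = ψ(p₁) = s for some s ∈ S, or (ψ(p₀), ψ(p₁)) = (φ(p₀), φ(p₁)). -/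

import Mathlib

/-
Fix the hub color `y`. Coloring the path `G - q` greedily from `p₀`, every interior vertex has at
least two colors other than `y`, so `x, y, z` fails to extend only if every choice is forced: the
list of vertex `n` minus `y` is `{d (n-1), d n}` for a sequence `d` running from `x` to `z`, and
`y` lies in every interior list. If `s ≠ s'` are blocked hub colors, `s'` lies in every list along
the forced sequence for `s`, which therefore hits `s'` exactly at the odd positions; as it ends at
`cc ≠ s'`, the path has an odd number of edges, and position `1` determines `s'`, so `|S| = 2`.
For a non-extendable `ψ`, the same alternation (for a hub outside `S`, both colors of `S`
alternate along its forced sequence) and the uniqueness of a forced sequence with a given start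
pin down `ψ(p₀)` and `ψ(p₁)`.
-/

/-- Vertex type of a broken wheel whose hub-deleted path `p₀ u₁ … u_t p₁` has `t + 2`
vertices: `some i` is the `i`-th path vertex (so `some 0 = p₀` and
`some (Fin.last (t+1)) = p₁`), and `none` is the hub `q`. -/
abbrev BWVert (t : ℕ) := Option (Fin (t + 2))

/-- Adjacency in the broken wheel: the hub `q` is adjacent to every path vertex, and
two path vertices are adjacent exactly when they are consecutive. -/
def bwAdj (t : ℕ) : BWVert t → BWVert t → Prop
  | none, none => False
  | none, some _ => True
  | some _, none => True
  | some i, some j => i.val + 1 = j.val ∨ j.val + 1 = i.val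

/-- An `L`-coloring of (all of) the broken wheel. -/
def IsBWColoring (t : ℕ) (L : BWVert t → Finset ℕ) (c : BWVert t → ℕ) : Prop :=
  (∀ v, c v ∈ L v) ∧ ∀ v w, bwAdj t v w → c v ≠ c w

/-- `(a, b, cc)` is an `L`-coloring of the principal path `P = p₀ q p₁` (colors listed
in the order `p₀, q, p₁`); note that `p₀` and `p₁` are themselves adjacent exactly when
`t = 0`. -/
def IsPColoring (t : ℕ) (L : BWVert t → Finset ℕ) (a b cc : ℕ) : Prop :=
  a ∈ L (some 0) ∧ b ∈ L none ∧ cc ∈ L (some (Fin.last (t + 1))) ∧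
  a ≠ b ∧ b ≠ cc ∧ (bwAdj t (some 0) (some (Fin.last (t + 1))) → a ≠ cc)

/-- The coloring `a, b, cc` of `p₀, q, p₁` extends to an `L`-coloring of the whole
broken wheel. -/
def ExtendsToBW (t : ℕ) (L : BWVert t → Finset ℕ) (a b cc : ℕ) : Prop :=
  ∃ c : BWVert t → ℕ, IsBWColoring t L c ∧
    c (some 0) = a ∧ c none = b ∧ c (some (Fin.last (t + 1))) = cc

open Finset Function

namespace BrokenWheel

section Sequences

variable {K : ℕ → Finset ℕ} {t w σ : ℕ} {d e f : ℕ → ℕ}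

def IsProperSeq (K : ℕ → Finset ℕ) (t : ℕ) (f : ℕ → ℕ) : Prop :=
  ∀ n < t, f (n + 1) ∈ K (n + 1) ∧ f n ≠ f (n + 1)

-- Once position `n` is colored `d n`, position `n + 1` can only be colored `d (n + 1)`.
def IsForcedSeq (K : ℕ → Finset ℕ) (t : ℕ) (d : ℕ → ℕ) : Prop :=
  ∀ n < t, K (n + 1) = {d n, d (n + 1)} ∧ d n ≠ d (n + 1)

theorem forall_lt_succ_update {R : ℕ → ℕ → ℕ → Prop}
    (hf : ∀ n < t, R n (f n) (f (n + 1))) (hw : R t (f t) w) :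
    ∀ n < t + 1, R n (update f (t + 1) w n) (update f (t + 1) w (n + 1)) := by
  intro n hn
  rcases Nat.lt_succ_iff_lt_or_eq.1 hn with hn | rfl
  · rw [update_of_ne (by omega), update_of_ne (by omega)]
    exact hf n hn
  · rwa [update_of_ne (by omega), update_self]

theorem IsProperSeq.update (hf : IsProperSeq K t f) (hw : w ∈ K (t + 1))
    (hne : f t ≠ w) : IsProperSeq K (t + 1) (update f (t + 1) w) :=
  forall_lt_succ_update (R := fun n u v => v ∈ K (n + 1) ∧ u ≠ v) hf ⟨hw, hne⟩

theorem IsForcedSeq.update (hd : IsForcedSeq K t d)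
    (hw : K (t + 1) = {d t, w}) (hne : d t ≠ w) : IsForcedSeq K (t + 1) (update d (t + 1) w) :=
  forall_lt_succ_update (R := fun n u v => K (n + 1) = {u, v} ∧ u ≠ v) hd ⟨hw, hne⟩

theorem IsForcedSeq.isProperSeq (hd : IsForcedSeq K t d) : IsProperSeq K t d :=
  fun n hn => ⟨(hd n hn).1 ▸ mem_insert_of_mem (mem_singleton_self _), (hd n hn).2⟩

theorem exists_isProperSeq_or_isForcedSeq (hK : ∀ n < t, 2 ≤ #(K (n + 1))) (x z : ℕ) :
    (∃ f, f 0 = x ∧ IsProperSeq K t f ∧ f t ≠ z) ∨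
      ∃ d, d 0 = x ∧ d t = z ∧ IsForcedSeq K t d := by
  induction t generalizing z with
  | zero =>
    by_cases hxz : x = z
    · exact .inr ⟨fun _ => x, rfl, hxz, fun n hn => absurd hn n.not_lt_zero⟩
    · exact .inl ⟨fun _ => x, rfl, fun n hn => absurd hn n.not_lt_zero, hxz⟩
  | succ t ih =>
    obtain ⟨w, hwK, hwz⟩ := exists_mem_ne (hK t t.lt_succ_self) z
    rcases ih (fun n hn => hK n (by omega)) w with ⟨f, hf0, hf, hft⟩ | ⟨d, hd0, hdt, hd⟩
    · refine .inl ⟨update f (t + 1) w, by simp [hf0], hf.update hwK hft, ?_⟩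
      simpa using hwz
    by_cases hw' : ∃ w' ∈ K (t + 1), w' ≠ w ∧ w' ≠ z
    · obtain ⟨w', hw'K, hw'w, hw'z⟩ := hw'
      refine .inl ⟨update d (t + 1) w', by simp [hd0], ?_, by simpa using hw'z⟩
      exact hd.isProperSeq.update hw'K (hdt ▸ hw'w.symm)
    · push Not at hw'
      have hKwz : K (t + 1) = {w, z} := by
        refine eq_of_subset_of_card_le (fun u hu => ?_) (card_le_two.trans (hK t t.lt_succ_self))
        by_cases huw : u = w
        · simp [huw]
        · simp [hw' u hu huw]
      refine .inr ⟨update d (t + 1) z, by simp [hd0], by simp, ?_⟩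
      exact hd.update (hdt ▸ hKwz) (hdt ▸ hwz)

theorem IsForcedSeq.eq_iff_even (hd : IsForcedSeq K t d) (hσ : ∀ n < t, σ ∈ K (n + 1)) :
    ∀ n ≤ t, (d n = σ ↔ (d 0 = σ ↔ Even n)) := by
  intro n hn
  induction n with
  | zero => simp
  | succ n ih =>
    obtain ⟨hK, hne⟩ := hd n (by omega)
    have hσn := hK ▸ hσ n (by omega)
    rw [mem_insert, mem_singleton] at hσn
    have hstep : d (n + 1) = σ ↔ ¬ d n = σ := by
      constructor
      · rintro h rfl; exact hne h.symm
      · intro h; exact (hσn.resolve_left (Ne.symm h)).symm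
    rw [hstep, ih (by omega), Nat.even_add_one]
    tauto

theorem IsForcedSeq.eq_of_eq_zero (hd : IsForcedSeq K t d) (he : IsForcedSeq K t e)
    (h0 : d 0 = e 0) : ∀ n ≤ t, d n = e n := by
  intro n hn
  induction n with
  | zero => exact h0
  | succ n ih =>
    obtain ⟨hKd, hne⟩ := hd n (by omega)
    have hmem : d (n + 1) ∈ K (n + 1) := hKd ▸ mem_insert_of_mem (mem_singleton_self _)
    rw [(he n (by omega)).1, mem_insert, mem_singleton, ← ih (by omega)] at hmem
    exact hmem.resolve_left hne.symm

theorem IsForcedSeq.even_of_ne (hd : IsForcedSeq K t d) (hσ : ∀ n < t, σ ∈ K (n + 1))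
    (h0 : d 0 ≠ σ) (ht : d t ≠ σ) : Even t := by
  simpa [h0, ht] using hd.eq_iff_even hσ t le_rfl

theorem IsForcedSeq.one_eq (ht : 0 < t) (hd : IsForcedSeq K t d) (hσ : ∀ n < t, σ ∈ K (n + 1))
    (h0 : d 0 ≠ σ) : d 1 = σ := by
  simpa [h0] using hd.eq_iff_even hσ 1 ht

theorem IsForcedSeq.last_eq_of_even (hte : Even t) (hd : IsForcedSeq K t d)
    (hσ : ∀ n < t, σ ∈ K (n + 1)) (h0 : d 0 = σ) : d t = σ :=
  (hd.eq_iff_even hσ t le_rfl).2 (iff_of_true h0 hte)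

theorem IsForcedSeq.endpoints_of_mem (ht : 0 < t) (hte : Even t) (hc : IsForcedSeq K t d)
    (he : IsForcedSeq K t e) (hσ : ∀ n < t, σ ∈ K (n + 1)) (hc0 : d 0 ≠ σ) :
    (e 0 = σ ∧ e t = σ) ∨ (e 0 = d 0 ∧ e t = d t) := by
  by_cases he0 : e 0 = σ
  · exact .inl ⟨he0, he.last_eq_of_even hte hσ he0⟩
  · have hK1 : e 0 ∈ K 1 := (he 0 ht).1 ▸ mem_insert_self _ _
    rw [(hc 0 ht).1, hc.one_eq ht hσ hc0, mem_insert, mem_singleton] at hK1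
    have h0 : e 0 = d 0 := hK1.resolve_right he0
    exact .inr ⟨h0, he.eq_of_eq_zero hc h0 t le_rfl⟩

theorem IsForcedSeq.endpoints_of_two_mem (ht : 0 < t) (hte : Even t) (he : IsForcedSeq K t e)
    {σ' : ℕ} (hσσ' : σ ≠ σ') (hσ : ∀ n < t, σ ∈ K (n + 1)) (hσ' : ∀ n < t, σ' ∈ K (n + 1)) :
    (e 0 = σ ∧ e t = σ) ∨ (e 0 = σ' ∧ e t = σ') := by
  have h1 := (he 0 ht).1 ▸ hσ 0 ht
  have h2 := (he 0 ht).1 ▸ hσ' 0 ht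
  simp only [mem_insert, mem_singleton] at h1 h2
  have he0 : e 0 = σ ∨ e 0 = σ' := by grind
  rcases he0 with h | h
  exacts [.inl ⟨h, he.last_eq_of_even hte hσ h⟩, .inr ⟨h, he.last_eq_of_even hte hσ' h⟩]

theorem mem_of_isForcedSeq_sdiff {M : ℕ → Finset ℕ} {y : ℕ} (hM : ∀ n < t, 3 ≤ #(M (n + 1)))
    (hd : IsForcedSeq (fun n => M n \ {y}) t d) : ∀ n < t, y ∈ M (n + 1) := by
  intro n hn
  by_contra hy
  have h3 := hM n hn
  rw [← erase_eq_of_notMem hy, ← sdiff_singleton_eq_erase,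
    show M (n + 1) \ {y} = _ from (hd n hn).1] at h3
  exact absurd (h3.trans card_le_two) (by omega)

end Sequences

section Wheel

variable {t : ℕ} {L : BWVert t → Finset ℕ}

-- The list of the `n`-th vertex of the path `G - q`; the index is read modulo `t + 2`.
def pathList (L : BWVert t → Finset ℕ) (n : ℕ) : Finset ℕ := L (some (Fin.ofNat (t + 2) n))

@[simp]
theorem pathList_val (i : Fin (t + 2)) : pathList L i = L (some i) := by
  simp [pathList]

theorem extendsToBW_of_isProperSeq {x y z : ℕ} {f : ℕ → ℕ}
    (hx : x ∈ L (some 0)) (hy : y ∈ L none) (hz : z ∈ L (some (Fin.last (t + 1))))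
    (hxy : x ≠ y) (hyz : y ≠ z) (hf0 : f 0 = x)
    (hf : IsProperSeq (fun n => pathList L n \ {y}) t f) (hft : f t ≠ z) :
    ExtendsToBW t L x y z := by
  set g := update f (t + 1) z
  have hg0 : g 0 = x := by simp [g, hf0]
  have hg : IsProperSeq (fun n => pathList L n \ {y}) (t + 1) g :=
    hf.update (by simpa [hyz.symm] using pathList_val (L := L) (Fin.last (t + 1)) ▸ hz) hft
  have hmem : ∀ i : Fin (t + 2), g i ∈ L (some i) \ {y} := by
    rintro ⟨_ | n, hn⟩
    · simpa [hg0, hxy] using hx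
    · exact pathList_val (L := L) ⟨n + 1, hn⟩ ▸ (hg n (by omega)).1
  refine ⟨fun v => v.elim y fun i => g i, ⟨?_, ?_⟩, hg0, rfl, by simp [g]⟩
  · rintro (_ | i)
    exacts [hy, (mem_sdiff.1 (hmem i)).1]
  · rintro (_ | i) (_ | j) hij
    · exact hij.elim
    · exact fun h => (mem_sdiff.1 (hmem j)).2 (mem_singleton.2 h.symm)
    · exact fun h => (mem_sdiff.1 (hmem i)).2 (mem_singleton.2 h)
    · rcases hij with h | h
      · simpa [← h] using (hg i (by omega)).2
      · simpa [← h] using (hg j (by omega)).2.symm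

theorem three_le_card_pathList
    (hL : ∀ v : BWVert t, v ≠ some 0 → v ≠ none → v ≠ some (Fin.last (t + 1)) →
      3 ≤ (L v).card) :
    ∀ n < t, 3 ≤ #(pathList L (n + 1)) := by
  intro n hn
  have hval : (Fin.ofNat (t + 2) (n + 1)).val = n + 1 := by
    rw [Fin.val_ofNat, Nat.mod_eq_of_lt (by omega)]
  refine hL _ ?_ (by simp) ?_ <;>
    simp only [ne_eq, Option.some_inj, Fin.ext_iff, hval, Fin.val_zero, Fin.val_last] <;> omega

theorem exists_isForcedSeq_of_not_extendsToBW {x y z : ℕ}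
    (hx : x ∈ L (some 0)) (hy : y ∈ L none) (hz : z ∈ L (some (Fin.last (t + 1))))
    (hxy : x ≠ y) (hyz : y ≠ z) (hM : ∀ n < t, 3 ≤ #(pathList L (n + 1)))
    (hext : ¬ ExtendsToBW t L x y z) :
    ∃ d, d 0 = x ∧ d t = z ∧ IsForcedSeq (fun n => pathList L n \ {y}) t d := by
  have hK : ∀ n < t, 2 ≤ #(pathList L (n + 1) \ {y}) := fun n hn => by
    have := le_card_sdiff {y} (pathList L (n + 1))
    rw [card_singleton] at this
    have := hM n hn
    omega
  refine (exists_isProperSeq_or_isForcedSeq (K := fun n => pathList L n \ {y}) hK x z).resolve_left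
    fun ⟨f, hf0, hf, hft⟩ => hext (extendsToBW_of_isProperSeq hx hy hz hxy hyz hf0 hf hft)

end Wheel

end BrokenWheel

open BrokenWheel

theorem bwheel_blocked_middle_set_general (t : ℕ) (L : BWVert t → Finset ℕ)
    (hL : ∀ v : BWVert t, v ≠ some 0 → v ≠ none → v ≠ some (Fin.last (t + 1)) →
      3 ≤ (L v).card)
    (a cc : ℕ) (ha : a ∈ L (some 0)) (hcc : cc ∈ L (some (Fin.last (t + 1))))
    (hprop : bwAdj t (some 0) (some (Fin.last (t + 1))) → a ≠ cc)
    (S : Finset ℕ) (hSsub : S ⊆ L none) (hSne : ∀ s ∈ S, s ≠ a ∧ s ≠ cc)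
    (hScard : 2 ≤ S.card)
    (hSblocked : ∀ s ∈ S, ¬ ExtendsToBW t L a s cc) :
    S.card = 2 ∧ Odd (t + 1) ∧
    ∀ x y z : ℕ, IsPColoring t L x y z → ¬ ExtendsToBW t L x y z →
      (∃ s ∈ S, x = s ∧ z = s) ∨ (x = a ∧ z = cc) := by
  have hM := three_le_card_pathList hL
  have hblock : ∀ s ∈ S, ∃ c, c 0 = a ∧ c t = cc ∧
      IsForcedSeq (fun n => pathList L n \ {s}) t c := fun s hs =>
    exists_isForcedSeq_of_not_extendsToBW ha (hSsub hs) hcc (hSne s hs).1.symm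
      (hSne s hs).2 hM (hSblocked s hs)
  have hmem : ∀ u ∈ S, ∀ y ≠ u, ∀ n < t, u ∈ pathList L (n + 1) \ {y} := by
    intro u hu y hyu n hn
    obtain ⟨c, -, -, hc⟩ := hblock u hu
    exact mem_sdiff.2 ⟨mem_of_isForcedSeq_sdiff hM hc n hn, notMem_singleton.2 hyu.symm⟩
  obtain ⟨s, hs, s', hs', hss'⟩ := one_lt_card.1 hScard
  obtain ⟨c, hc0, hct, hc⟩ := hblock s hs
  obtain ht : 0 < t := by
    rcases Nat.eq_zero_or_pos t with rfl | ht
    · exact absurd (hc0.symm.trans hct) (hprop (by simp [bwAdj]))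
    · exact ht
  have hte : Even t := hc.even_of_ne (hmem s' hs' s hss') (hc0 ▸ (hSne s' hs').1.symm)
    (hct ▸ (hSne s' hs').2.symm)
  have hSsub2 : S ⊆ {s, c 1} := fun u hu => by
    rcases eq_or_ne u s with rfl | hus
    · exact mem_insert_self _ _
    · rw [hc.one_eq ht (hmem u hu s hus.symm) (hc0 ▸ (hSne u hu).1.symm)]
      exact mem_insert_of_mem (mem_singleton_self _)
  refine ⟨le_antisymm ((card_le_card hSsub2).trans card_le_two) hScard, hte.add_one,
    fun x y z hP hext => ?_⟩
  obtain ⟨hx, hy, hz, hxy, hyz, -⟩ := hP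
  obtain ⟨e, rfl, rfl, he⟩ := exists_isForcedSeq_of_not_extendsToBW hx hy hz hxy hyz hM hext
  by_cases hyS : y ∈ S
  · obtain ⟨u, hu, huy⟩ := exists_mem_ne hScard y
    obtain ⟨c, hc0, hct, hc⟩ := hblock y hyS
    rcases hc.endpoints_of_mem ht hte he (hmem u hu y huy.symm) (hc0 ▸ (hSne u hu).1.symm)
      with h | h
    exacts [.inl ⟨u, hu, h⟩, .inr (hc0 ▸ hct ▸ h)]
  · rcases he.endpoints_of_two_mem ht hte hss' (hmem s hs y fun h => hyS (h ▸ hs))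
      (hmem s' hs' y fun h => hyS (h ▸ hs'))
      with h | h
    exacts [.inl ⟨s, hs, h⟩, .inl ⟨s', hs', h⟩]

/-- Proposition 2.8(3): if `φ` is an `L`-coloring of `{p₀, p₁}` (with colors `a, cc`)
and `S ⊆ L(q) \ {a, cc}` has `|S| ≥ 2` and no `s ∈ S` yields an `L`-coloring of `G`
via `a, s, cc` on `p₀, q, p₁`, then `|S| = 2`, the path `G - q` has an odd number of
edges, and every non-extendable `L`-coloring `ψ` of `V(P)` either uses the same color
`s ∈ S` on both `p₀` and `p₁`, or restricts to `φ` on `{p₀, p₁}`. -/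
theorem bwheel_blocked_middle_set (t : ℕ) (L : BWVert t → Finset ℕ)
    (hL : ∀ v : BWVert t, v ≠ some 0 → v ≠ none → v ≠ some (Fin.last (t + 1)) →
      3 ≤ (L v).card)
    (h0 : (L (some 0)).Nonempty) (h1 : (L (some (Fin.last (t + 1)))).Nonempty)
    (a cc : ℕ) (ha : a ∈ L (some 0)) (hcc : cc ∈ L (some (Fin.last (t + 1))))
    (hprop : bwAdj t (some 0) (some (Fin.last (t + 1))) → a ≠ cc)
    (S : Finset ℕ) (hSsub : S ⊆ L none) (hSne : ∀ s ∈ S, s ≠ a ∧ s ≠ cc)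
    (hScard : 2 ≤ S.card)
    (hSblocked : ∀ s ∈ S, ¬ ExtendsToBW t L a s cc) :
    S.card = 2 ∧ Odd (t + 1) ∧
    ∀ x y z : ℕ, IsPColoring t L x y z → ¬ ExtendsToBW t L x y z →
      (∃ s ∈ S, x = s ∧ z = s) ∨ (x = a ∧ z = cc) :=
  bwheel_blocked_middle_set_general t L hL a cc ha hcc hprop S hSsub hSne hScard hSblocked
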